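/- Let Γ be a cocompact Kleinian group and let α ∈ comm(Γ) \ Γ. Then there exists a constant c₀ > 1 such that N(T) > c₀ for every loxodromic element T of the double coset Γα⁻¹Γ. -/

import Mathlib

open Matrix Complex Pointwise

/-- `SL(2,ℂ)`. -/
abbrev SL2C := Matrix.SpecialLinearGroup (Fin 2) ℂ

/-- The topology on `SL(2,ℂ)` induced from the matrix entries. -/
noncomputable instance : TopologicalSpace SL2C :=
  TopologicalSpace.induced (fun A => (A : Matrix (Fin 2) (Fin 2) ℂ)) inferInstance

/-- `PSL(2,ℂ)`, the quotient of `SL(2,ℂ)` by its center `{±I}`,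
equipped with the quotient topology. -/
abbrev PSL2C := SL2C ⧸ Subgroup.center SL2C

/-- The diagonal matrix `diag(a, a⁻¹)` as an element of `SL(2,ℂ)`. -/
noncomputable def dMat (a : ℂ) (h : a ≠ 0) : SL2C :=
  ⟨!![a, 0; 0, a⁻¹], by rw [Matrix.det_fin_two_of]; simp [mul_inv_cancel₀ h]⟩

/-- The projection `SL(2,ℂ) → PSL(2,ℂ)`. -/
def projMk : SL2C →* PSL2C := QuotientGroup.mk' _

/-- `T ∈ PSL(2,ℂ)` is loxodromic with diagonal parameter `a`: it is conjugate in
`PSL(2,ℂ)` to (the class of) `diag(a, a⁻¹)` with `|a| > 1`.  Its norm is `N(T) = |a|²`. -/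
def IsLoxodromicWith (T : PSL2C) (a : ℂ) : Prop :=
  ∃ h : a ≠ 0, 1 < ‖a‖ ∧ IsConj (projMk (dMat a h)) T

/-- `T ∈ PSL(2,ℂ)` is loxodromic. -/
def IsLoxodromic (T : PSL2C) : Prop := ∃ a : ℂ, IsLoxodromicWith T a

/-- `T ∈ PSL(2,ℂ)` is elliptic: a nonidentity element conjugate to (the class of)
`diag(e^{iφ/2}, e^{-iφ/2})` for some real `φ`. -/
def IsElliptic (T : PSL2C) : Prop :=
  T ≠ 1 ∧ ∃ φ : ℝ,
    IsConj (projMk (dMat (Complex.exp (φ * Complex.I / 2)) (Complex.exp_ne_zero _))) T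

/-- `T ∈ PSL(2,ℂ)` is parabolic: a nonidentity element whose trace squared equals `4`. -/
def IsParabolic (T : PSL2C) : Prop :=
  T ≠ 1 ∧ ∃ S : SL2C, projMk S = T ∧ (Matrix.trace (S : Matrix (Fin 2) (Fin 2) ℂ)) ^ 2 = 4

/-- The conjugate subgroup `α⁻¹ Γ α`. -/
def conjSG (Γ : Subgroup PSL2C) (α : PSL2C) : Subgroup PSL2C :=
  Γ.map (MulAut.conj α⁻¹).toMonoidHom

/-- `α` belongs to the commensurator of `Γ` in `PSL(2,ℂ)`: both indices
`[Γ : Γ ∩ α⁻¹Γα]` and `[α⁻¹Γα : Γ ∩ α⁻¹Γα]` are finite. -/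
def InCommensurator (Γ : Subgroup PSL2C) (α : PSL2C) : Prop :=
  (conjSG Γ α).relIndex Γ ≠ 0 ∧ Γ.relIndex (conjSG Γ α) ≠ 0

/-- The double coset `Γ g Γ = {γ₁ g γ₂ : γ₁, γ₂ ∈ Γ}`. -/
def doubleCoset (Γ : Subgroup PSL2C) (g : PSL2C) : Set PSL2C :=
  {x | ∃ γ₁ ∈ Γ, ∃ γ₂ ∈ Γ, x = γ₁ * g * γ₂}

/-- The centralizer `C_Γ(T) = {σ ∈ Γ : σT = Tσ}` of `T` in `Γ`, as a subgroup. -/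
def centIn (Γ : Subgroup PSL2C) (T : PSL2C) : Subgroup PSL2C :=
  Γ ⊓ Subgroup.centralizer {T}

/-- `R` is primitive in `Γ`: there is no `S ∈ Γ` and integer `m ≥ 2` with `Sᵐ = R`. -/
def IsPrimitive (Γ : Subgroup PSL2C) (R : PSL2C) : Prop :=
  ¬ ∃ S ∈ Γ, ∃ m : ℕ, 2 ≤ m ∧ S ^ m = R

/-!
The modulus `|a|` of a loxodromic `T` is an invariant of its conjugacy class, since
`tr T = ±(a + a⁻¹)` and `|a| > 1`. By cocompactness there is a compact `K` with `KΓ = PSL(2,ℂ)`,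
so every loxodromic `T` with `|a| ≤ 2` is `Γ`-conjugate into the compact set
`M = {k⁻¹ diag(a, a⁻¹) k : k ∈ K, 1 ≤ |a| ≤ 2}`. The double coset `Γα⁻¹Γ` is stable under
`Γ`-conjugation and, as `[Γ : Γ ∩ α⁻¹Γα] < ∞`, is a finite union of translates of the discrete
group `Γ`, so it meets `M` in a finite set. Hence only finitely many values `|a| ≤ 2` occur,
all of them `> 1`.
-/

open Set Filter Topology

-- Mathlib's topology on `SL(n, R)` is the frozen one up to unfolding, which instance search
-- does not do; these transfer the instances we need.
instance : IsTopologicalGroup SL2C := Matrix.SpecialLinearGroup.topologicalGroup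

theorem isClosedEmbedding_coe_SL2C :
    IsClosedEmbedding ((↑) : SL2C → Matrix (Fin 2) (Fin 2) ℂ) :=
  Matrix.SpecialLinearGroup.isClosedEmbedding_val

instance : T2Space SL2C := isClosedEmbedding_coe_SL2C.isEmbedding.t2Space

instance : LocallyCompactSpace SL2C :=
  haveI : LocallyCompactSpace (Matrix (Fin 2) (Fin 2) ℂ) :=
    inferInstanceAs (LocallyCompactSpace (Fin 2 → Fin 2 → ℂ))
  isClosedEmbedding_coe_SL2C.locallyCompactSpace

instance : IsClosed (Subgroup.center SL2C : Set SL2C) := by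
  rw [Subgroup.coe_center, ← Set.centralizer_univ]
  exact Set.isClosed_centralizer _

theorem exists_gt_forall_lt_of_finite {α : Type*} [LinearOrder α] [TopologicalSpace α]
    [OrderTopology α] [DenselyOrdered α] [NoMaxOrder α] {S : Set α} (hS : S.Finite) {b : α}
    (h : ∀ x ∈ S, b < x) : ∃ c, b < c ∧ ∀ x ∈ S, c < x :=
  ((eventually_mem_nhdsWithin (s := Ioi b)).and <| hS.eventually_all.2 fun x hx =>
    eventually_nhdsWithin_of_eventually_nhds (eventually_lt_nhds (h x hx))).exists

theorem IsOpenMap.exists_isCompact_surjOn {X Y : Type*} [TopologicalSpace X] [TopologicalSpace Y]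
    [WeaklyLocallyCompactSpace X] [CompactSpace Y] {f : X → Y} (hf : IsOpenMap f)
    (hsurj : Function.Surjective f) : ∃ K, IsCompact K ∧ SurjOn f K univ := by
  choose C hCc hCn using fun x : X => exists_compact_mem_nhds x
  obtain ⟨t, ht⟩ := isCompact_univ.elim_finite_subcover (fun x => f '' interior (C x))
    (fun x => hf _ isOpen_interior) fun y _ => by
      obtain ⟨x, rfl⟩ := hsurj y
      exact mem_iUnion.2 ⟨x, mem_image_of_mem f (mem_interior_iff_mem_nhds.2 (hCn x))⟩
  refine ⟨⋃ x ∈ t, C x, t.isCompact_biUnion fun x _ => hCc x, fun y _ => ?_⟩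
  obtain ⟨x, hxt, z, hz, rfl⟩ := by simpa using ht (mem_univ y)
  exact ⟨z, mem_biUnion hxt (interior_subset hz), rfl⟩

theorem Subgroup.finite_smul_inter_of_isCompact {G : Type*} [Group G] [TopologicalSpace G]
    [IsTopologicalGroup G] [T2Space G] (H : Subgroup G) [DiscreteTopology H] (g : G)
    {C : Set G} (hC : IsCompact C) : (g • (H : Set G) ∩ C).Finite := by
  have : ((H : Set G) ∩ g⁻¹ • C).Finite :=
    ((hC.smul g⁻¹).inter_left H.isClosed_of_discrete).finite
      ((isDiscrete_iff_discreteTopology.2 ‹_›).mono inter_subset_left)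
  simpa [Set.smul_set_inter, smul_inv_smul] using this.smul_set (a := g)

theorem exists_trace_eq_mul_of_isConj_projMk {A B : SL2C} (h : IsConj (projMk A) (projMk B)) :
    ∃ r : ℂ, r ^ 2 = 1 ∧
      (B : Matrix (Fin 2) (Fin 2) ℂ).trace = r * (A : Matrix (Fin 2) (Fin 2) ℂ).trace := by
  obtain ⟨c, hc⟩ := isConj_iff.mp h
  obtain ⟨C, rfl⟩ := QuotientGroup.mk'_surjective (Subgroup.center SL2C) c
  have hmem : (C * A * C⁻¹)⁻¹ * B ∈ Subgroup.center SL2C := by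
    rw [← QuotientGroup.eq]
    simpa [projMk] using hc
  obtain ⟨r, hr, hZ⟩ := Matrix.SpecialLinearGroup.mem_center_iff.mp hmem
  refine ⟨r, by simpa using hr, ?_⟩
  have hB : B = C * A * C⁻¹ * ((C * A * C⁻¹)⁻¹ * B) := by group
  have htr : ((C * A * C⁻¹ : SL2C) : Matrix (Fin 2) (Fin 2) ℂ).trace
      = (A : Matrix (Fin 2) (Fin 2) ℂ).trace := by
    rw [Matrix.SpecialLinearGroup.coe_mul, Matrix.SpecialLinearGroup.coe_mul,
      Matrix.trace_mul_cycle, ← Matrix.SpecialLinearGroup.coe_mul, inv_mul_cancel,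
      Matrix.SpecialLinearGroup.coe_one, one_mul]
  rw [hB, Matrix.SpecialLinearGroup.coe_mul, ← hZ, Matrix.scalar_apply,
    ← Matrix.smul_one_eq_diagonal, Matrix.mul_smul, mul_one, Matrix.trace_smul, htr,
    smul_eq_mul]

theorem norm_eq_of_add_inv_eq_mul {a b r : ℂ} (ha : 1 < ‖a‖) (hb : 1 < ‖b‖) (hr : r ^ 2 = 1)
    (h : b + b⁻¹ = r * (a + a⁻¹)) : ‖a‖ = ‖b‖ := by
  have ha0 : a ≠ 0 := norm_pos_iff.mp (one_pos.trans ha)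
  have hb0 : b ≠ 0 := norm_pos_iff.mp (one_pos.trans hb)
  have hr1 : ‖r‖ = 1 :=
    (pow_eq_one_iff_of_nonneg (norm_nonneg r) two_ne_zero).mp (by rw [← norm_pow, hr, norm_one])
  have hfac : (b - r * a) * (a * b - r) = 0 := by
    field_simp at h
    linear_combination h + a * hr
  rcases mul_eq_zero.mp hfac with h1 | h1
  · rw [sub_eq_zero.mp h1, norm_mul, hr1, one_mul]
  · have : ‖a‖ * ‖b‖ = 1 := by rw [← norm_mul, sub_eq_zero.mp h1, hr1]
    nlinarith

theorem trace_dMat (a : ℂ) (h : a ≠ 0) :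
    ((dMat a h : SL2C) : Matrix (Fin 2) (Fin 2) ℂ).trace = a + a⁻¹ := by
  simp [dMat, Matrix.trace_fin_two]

theorem IsLoxodromicWith.norm_eq {T : PSL2C} {a b : ℂ} (ha : IsLoxodromicWith T a)
    (hb : IsLoxodromicWith T b) : ‖a‖ = ‖b‖ := by
  obtain ⟨ha0, ha1, hTa⟩ := ha
  obtain ⟨hb0, hb1, hTb⟩ := hb
  obtain ⟨r, hr, htr⟩ := exists_trace_eq_mul_of_isConj_projMk (hTa.trans hTb.symm)
  rw [trace_dMat, trace_dMat] at htr
  exact norm_eq_of_add_inv_eq_mul ha1 hb1 hr htr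

theorem IsLoxodromicWith.conj {T : PSL2C} {a : ℂ} (h : IsLoxodromicWith T a) (g : PSL2C) :
    IsLoxodromicWith (g * T * g⁻¹) a :=
  let ⟨h0, h1, hT⟩ := h
  ⟨h0, h1, hT.trans (isConj_iff.mpr ⟨g, rfl⟩)⟩

theorem conj_mem_doubleCoset {Γ : Subgroup PSL2C} {g T γ : PSL2C} (hT : T ∈ doubleCoset Γ g)
    (hγ : γ ∈ Γ) : γ * T * γ⁻¹ ∈ doubleCoset Γ g := by
  obtain ⟨γ₁, h₁, γ₂, h₂, rfl⟩ := hT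
  exact ⟨γ * γ₁, Γ.mul_mem hγ h₁, γ₂ * γ⁻¹, Γ.mul_mem h₂ (Γ.inv_mem hγ), by group⟩

theorem doubleCoset_subset_iUnion_smul (Γ : Subgroup PSL2C) (α : PSL2C) :
    doubleCoset Γ α⁻¹ ⊆ ⋃ q : Γ ⧸ (conjSG Γ α).subgroupOf Γ,
      ((q.out : PSL2C) * α⁻¹) • (Γ : Set PSL2C) := by
  rintro _ ⟨γ₁, h₁, γ₂, h₂, rfl⟩
  obtain ⟨⟨h, hh⟩, hout⟩ := QuotientGroup.mk_out_eq_mul ((conjSG Γ α).subgroupOf Γ) ⟨γ₁, h₁⟩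
  obtain ⟨g, hg, hgh⟩ := Subgroup.mem_map.mp (Subgroup.mem_subgroupOf.mp hh)
  refine mem_iUnion.2 ⟨QuotientGroup.mk ⟨γ₁, h₁⟩,
    Set.mem_smul_set.2 ⟨g⁻¹ * γ₂, Γ.mul_mem (Γ.inv_mem hg) h₂, ?_⟩⟩
  simp only [hout, Subgroup.coe_mul, ← hgh, MulEquiv.coe_toMonoidHom, MulAut.conj_apply,
    smul_eq_mul]
  group

theorem finite_doubleCoset_inter_of_isCompact (Γ : Subgroup PSL2C) [DiscreteTopology Γ]
    {α : PSL2C} (hα : (conjSG Γ α).relIndex Γ ≠ 0) {C : Set PSL2C} (hC : IsCompact C) :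
    (doubleCoset Γ α⁻¹ ∩ C).Finite := by
  have : Finite (Γ ⧸ (conjSG Γ α).subgroupOf Γ) := Nat.finite_of_card_ne_zero hα
  refine (finite_iUnion fun q : Γ ⧸ (conjSG Γ α).subgroupOf Γ =>
    Γ.finite_smul_inter_of_isCompact ((q.out : PSL2C) * α⁻¹) hC).subset ?_
  rw [← iUnion_inter]
  exact inter_subset_inter_left C (doubleCoset_subset_iUnion_smul Γ α)

theorem continuous_dMat : Continuous fun a : {a : ℂ // a ≠ 0} => dMat a a.2 := by
  refine continuous_induced_rng.2 ?_
  show Continuous fun a : {a : ℂ // a ≠ 0} => !![(a : ℂ), 0; 0, (a : ℂ)⁻¹]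
  fun_prop (disch := exact fun a => a.2)

def annulus : Set {a : ℂ // a ≠ 0} := {a | ‖(a : ℂ)‖ ∈ Icc (1 : ℝ) 2}

theorem isCompact_annulus : IsCompact annulus := by
  rw [Subtype.isCompact_iff]
  have : Subtype.val '' annulus = norm ⁻¹' Icc 1 2 := by
    ext a
    refine ⟨?_, fun ha => ⟨⟨a, ?_⟩, ha, rfl⟩⟩
    · rintro ⟨a, ha, rfl⟩; exact ha
    · rintro rfl; exact absurd ha.1 (by norm_num)
  rw [this]
  exact (isCompact_closedBall (0 : ℂ) 2).of_isClosed_subset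
    (isClosed_Icc.preimage continuous_norm) fun a ha => by simpa using ha.2

theorem exists_isCompact_conj_mem_of_isLoxodromicWith (Γ : Subgroup PSL2C)
    [CompactSpace (PSL2C ⧸ Γ)] : ∃ M : Set PSL2C, IsCompact M ∧
      ∀ T a, IsLoxodromicWith T a → ‖a‖ ≤ 2 → ∃ γ ∈ Γ, γ * T * γ⁻¹ ∈ M := by
  obtain ⟨K, hK, hKΓ⟩ :=
    (QuotientGroup.isOpenMap_coe (N := Γ)).exists_isCompact_surjOn QuotientGroup.mk_surjective
  let f : PSL2C × {a : ℂ // a ≠ 0} → PSL2C := fun p => p.1⁻¹ * projMk (dMat p.2 p.2.2) * p.1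
  have hf : Continuous f := (continuous_fst.inv.mul
    (QuotientGroup.continuous_mk.comp (continuous_dMat.comp continuous_snd))).mul continuous_fst
  refine ⟨f '' K ×ˢ annulus, (hK.prod isCompact_annulus).image hf,
    fun T a ⟨ha0, ha1, hT⟩ ha2 => ?_⟩
  obtain ⟨c, rfl⟩ := isConj_iff.mp hT
  obtain ⟨k, hk, hkc⟩ := hKΓ (mem_univ (↑c⁻¹ : PSL2C ⧸ Γ))
  exact ⟨k⁻¹ * c⁻¹, QuotientGroup.eq.mp hkc, ⟨(k, ⟨a, ha0⟩), ⟨hk, ha1.le, ha2⟩, by simp only [f]; group⟩⟩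

theorem exists_one_lt_forall_lt_norm {D M : Set PSL2C} (hDM : (D ∩ M).Finite)
    (hM : ∀ T ∈ D, ∀ a, IsLoxodromicWith T a → ‖a‖ ≤ 2 → ∃ U ∈ D ∩ M, IsLoxodromicWith U a) :
    ∃ c : ℝ, 1 < c ∧ ∀ T ∈ D, ∀ a, IsLoxodromicWith T a → c < ‖a‖ := by
  set S := {x : ℝ | ∃ T ∈ D, ∃ a, IsLoxodromicWith T a ∧ ‖a‖ ≤ 2 ∧ ‖a‖ = x}
  have hS : S.Finite := by
    refine (hDM.biUnion fun U _ => Set.Subsingleton.finite (s := {x : ℝ | ∃ a,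
      IsLoxodromicWith U a ∧ ‖a‖ = x}) ?_).subset ?_
    · rintro _ ⟨a, ha, rfl⟩ _ ⟨b, hb, rfl⟩
      exact ha.norm_eq hb
    · rintro _ ⟨T, hT, a, ha, ha2, rfl⟩
      obtain ⟨U, hU, hUa⟩ := hM T hT a ha ha2
      exact mem_biUnion hU ⟨a, hUa, rfl⟩
  obtain ⟨c, hc1, hcS⟩ := exists_gt_forall_lt_of_finite (hS.insert 2) <| by
    rintro _ (rfl | ⟨T, -, a, ⟨-, ha1, -⟩, -, rfl⟩)
    exacts [one_lt_two, ha1]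
  refine ⟨c, hc1, fun T hT a ha => ?_⟩
  rcases le_or_gt ‖a‖ 2 with ha2 | ha2
  · exact hcS _ (mem_insert_of_mem _ ⟨T, hT, a, ha, ha2, rfl⟩)
  · exact (hcS 2 (mem_insert _ _)).trans ha2

theorem stmt_13_general (Γ : Subgroup PSL2C)
    (hdisc : DiscreteTopology Γ) (hcpt : CompactSpace (PSL2C ⧸ Γ))
    (α : PSL2C) (hα : InCommensurator Γ α) :
    ∃ c₀ : ℝ, 1 < c₀ ∧ ∀ T ∈ doubleCoset Γ α⁻¹, ∀ a : ℂ,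
      IsLoxodromicWith T a → c₀ < ‖a‖ ^ 2 := by
  obtain ⟨M, hM, hΓM⟩ := exists_isCompact_conj_mem_of_isLoxodromicWith Γ
  obtain ⟨c, hc, hlt⟩ := exists_one_lt_forall_lt_norm
    (finite_doubleCoset_inter_of_isCompact Γ hα.1 hM) fun T hT a ha ha2 => by
      obtain ⟨γ, hγ, hγT⟩ := hΓM T a ha ha2
      exact ⟨γ * T * γ⁻¹, ⟨conj_mem_doubleCoset hT hγ, hγT⟩, ha.conj γ⟩
  exact ⟨c ^ 2, one_lt_pow₀ hc two_ne_zero, fun T hT a ha =>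
    pow_lt_pow_left₀ (hlt T hT a ha) (by linarith) two_ne_zero⟩

/-- Let `Γ` be a cocompact Kleinian group and `α ∈ comm(Γ) \ Γ`.
Then there is a constant `c₀ > 1` such that `N(T) > c₀` for every loxodromic element
`T` of the double coset `Γα⁻¹Γ`. -/
theorem stmt_13 (Γ : Subgroup PSL2C)
    (hdisc : DiscreteTopology Γ) (hcpt : CompactSpace (PSL2C ⧸ Γ))
    (α : PSL2C) (hα : InCommensurator Γ α) (hαΓ : α ∉ Γ) :
    ∃ c₀ : ℝ, 1 < c₀ ∧ ∀ T ∈ doubleCoset Γ α⁻¹, ∀ a : ℂ,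
      IsLoxodromicWith T a → c₀ < ‖a‖ ^ 2 :=
  stmt_13_general Γ hdisc hcpt α hα
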